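/- arXiv:2510.03899 — 2 statements merged into one kernel-verified Lean document; each statement's English description precedes it below -/
import Mathlib

section
/- Let T = (V, E) be a finite tree with a distinguished terminal t ∈ V, edge weights w(e) ≥ 1 for e ∈ E, subsets B, R ⊆ V, and α ∈ [0, 1]. Then the minimum, over all temporal labelings λ of T such that in T_λ at least α·|B| nodes of B and at least α·|R| nodes of R temporally reach t, of the weighted cost Σ_{({u,v},τ) ∈ E_λ} w({u,v}) equals the minimum of w(S) = Σ_{e ∈ S} w(e) over all connected subtrees S of T containing t with |V(S) ∩ B| ≥ α·|B| and |V(S) ∩ R| ≥ α·|R| (both minima are attained, e.g. with S = T). -/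
/-- A temporal path from `u` to `w`: `p` temporal edges with strictly increasing
timestamps. -/
def IsTemporalPath {V : Type*} (E : Set (Sym2 V × ℕ)) (u w : V)
    (p : ℕ) (vtx : Fin (p + 1) → V) (ts : Fin p → ℕ) : Prop :=
  vtx 0 = u ∧ vtx (Fin.last p) = w ∧ StrictMono ts ∧
    ∀ i : Fin p, (s(vtx i.castSucc, vtx i.succ), ts i) ∈ E

/-- `w` is temporally reachable from `u`. -/
def TemporallyReachable {V : Type*} (E : Set (Sym2 V × ℕ)) (u w : V) : Prop :=
  u = w ∨ ∃ (p : ℕ) (vtx : Fin (p + 1) → V) (ts : Fin p → ℕ),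
    IsTemporalPath E u w p vtx ts

/-- The temporal edges of the temporal graph `G_λ` induced by a temporal labeling `lab`
of the static graph `G`. -/
def inducedTemporalEdges {V : Type*} (G : SimpleGraph V) (lab : Sym2 V → Finset ℕ) :
    Set (Sym2 V × ℕ) :=
  {q | q.1 ∈ G.edgeSet ∧ q.2 ∈ lab q.1}

/-!
The nodes that temporally reach `t` under a labeling span a connected subgraph containing `t`,
since each of them reaches `t` along a temporal path through such nodes. In a tree, an edge
between two of these nodes lies on one of their two walks to `t`, so it carries a timestamp and
the labeling pays at least its weight: every feasible labeling costs at least the weight of a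
feasible subtree. Conversely, a feasible subtree is realized at cost exactly its weight by giving
each of its edges a single timestamp that decreases with the distance from `t`.
-/

open SimpleGraph

section

variable {V : Type*}

namespace SimpleGraph

variable {G : SimpleGraph V} {u v t : V}

theorem IsAcyclic.length_eq_dist (hG : G.IsAcyclic) {p : G.Walk u v} (hp : p.IsPath) :
    p.length = G.dist u v := by
  obtain ⟨q, hq, hq_len⟩ := p.reachable.exists_path_of_dist
  have : (⟨p, hp⟩ : G.Path u v) = ⟨q, hq⟩ := (hG.subsingleton_path u v).elim _ _
  rw [← hq_len, show p = q from congrArg Subtype.val this]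

theorem IsAcyclic.dist_getVert (hG : G.IsAcyclic) {p : G.Walk u v} (hp : p.IsPath) (i : ℕ) :
    G.dist (p.getVert i) v = p.length - i := by
  rw [← hG.length_eq_dist (hp.drop i), Walk.drop_length]

theorem IsAcyclic.mem_edges_or_mem_edges (hG : G.IsAcyclic) {x y : V} (hxy : G.Adj x y)
    (p : G.Walk x t) (q : G.Walk y t) : s(x, y) ∈ p.edges ∨ s(x, y) ∈ q.edges := by
  have := isBridge_iff_forall_walk_mem_edges.1 (isAcyclic_iff_forall_adj_isBridge.1 hG hxy)
    (p.append q.reverse)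
  simpa using this

theorem Connected.exists_isPath_of_induce {s : Set V} (hs : (G.induce s).Connected)
    (hu : u ∈ s) (hv : v ∈ s) :
    ∃ p : G.Walk u v, p.IsPath ∧ ∀ x ∈ p.support, x ∈ s := by
  obtain ⟨q⟩ := hs ⟨u, hu⟩ ⟨v, hv⟩
  set q' := q.map (Embedding.induce (G := G) s).toHom
  have hq' : ∀ x ∈ q'.support, x ∈ s := by
    rw [Walk.support_map, List.forall_mem_map]
    exact fun y _ => y.2
  classical
  exact ⟨q'.bypass, q'.bypass_isPath,
    fun x hx => hq' x (q'.support_bypass_subset_support hx)⟩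

end SimpleGraph

section Temporal

variable {E : Set (Sym2 V × ℕ)} {G : SimpleGraph V} {lab : Sym2 V → Finset ℕ} {u t : V}

theorem IsTemporalPath.tail {w : V} {p : ℕ} {vtx : Fin (p + 2) → V} {ts : Fin (p + 1) → ℕ}
    (h : IsTemporalPath E u w (p + 1) vtx ts) :
    IsTemporalPath E (vtx 1) w p (vtx ∘ Fin.succ) (ts ∘ Fin.succ) := by
  obtain ⟨-, hlast, hmono, hedges⟩ := h
  refine ⟨rfl, hlast, hmono.comp (Fin.strictMono_succ), fun i => ?_⟩
  simpa only [Function.comp_apply, Fin.succ_castSucc] using hedges i.succ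

theorem TemporallyReachable.exists_walk
    (h : TemporallyReachable (inducedTemporalEdges G lab) u t) :
    ∃ W : G.Walk u t,
      (∀ x ∈ W.support, TemporallyReachable (inducedTemporalEdges G lab) x t) ∧
      ∀ e ∈ W.edges, (lab e).Nonempty := by
  rcases h with rfl | ⟨p, vtx, ts, hpath⟩
  · exact ⟨.nil, by simp [TemporallyReachable], by simp⟩
  induction p generalizing u with
  | zero =>
    obtain ⟨rfl, rfl, -⟩ := hpath
    exact ⟨.nil, by simp [TemporallyReachable], by simp⟩
  | succ p ih =>
    obtain ⟨W, hsupp, hedges⟩ := ih _ _ hpath.tail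
    obtain ⟨rfl, -, -, hfirst⟩ := id hpath
    have hadj : G.Adj (vtx 0) (vtx 1) := (hfirst 0).1
    have hts : ts 0 ∈ lab s(vtx 0, vtx 1) := (hfirst 0).2
    refine ⟨.cons hadj W, ?_, ?_⟩
    · rw [Walk.support_cons, List.forall_mem_cons]
      exact ⟨.inr ⟨_, vtx, ts, hpath⟩, hsupp⟩
    · rw [Walk.edges_cons, List.forall_mem_cons]
      exact ⟨⟨_, hts⟩, hedges⟩

theorem SimpleGraph.Walk.temporallyReachable {v : V} (p : G.Walk u v) (ts : ℕ → ℕ)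
    (hts : StrictMono ts)
    (hlab : ∀ i < p.length, ts i ∈ lab s(p.getVert i, p.getVert (i + 1))) :
    TemporallyReachable (inducedTemporalEdges G lab) u v :=
  .inr ⟨p.length, fun i => p.getVert i, fun i => ts i, p.getVert_zero, p.getVert_length,
    hts.comp Fin.val_strictMono, fun i => ⟨p.adj_getVert_succ i.isLt, hlab i i.isLt⟩⟩

theorem connected_induce_of_temporallyReachable {s : Set V}
    (hs : ∀ x, x ∈ s ↔ TemporallyReachable (inducedTemporalEdges G lab) x t) :
    (G.induce s).Connected := by
  refine induce_connected_of_patches t ((hs t).2 (.inl rfl)) fun {v} hv => ?_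
  obtain ⟨W, hsupp, -⟩ := ((hs v).1 hv).exists_walk
  exact ⟨_, fun x hx => (hs x).2 (hsupp x hx), W.end_mem_support, W.start_mem_support,
    W.connected_induce_support _ _⟩

theorem SimpleGraph.IsAcyclic.label_nonempty_of_temporallyReachable (hG : G.IsAcyclic)
    {lab : Sym2 V → Finset ℕ} {e : Sym2 V} (he : e ∈ G.edgeSet)
    (hreach : ∀ x ∈ e, TemporallyReachable (inducedTemporalEdges G lab) x t) :
    (lab e).Nonempty := by
  induction e using Sym2.ind with
  | h x y =>
    obtain ⟨p, -, hp⟩ := (hreach x (Sym2.mem_mk_left x y)).exists_walk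
    obtain ⟨q, -, hq⟩ := (hreach y (Sym2.mem_mk_right x y)).exists_walk
    exact (hG.mem_edges_or_mem_edges he p q).elim (hp _) (hq _)

end Temporal

section Counting

variable [DecidableEq V] {s B : Finset V} {P : V → Prop}

theorem Finset.card_inter_le_ncard_setOf (h : ∀ u ∈ s, P u) :
    (s ∩ B).card ≤ {u | u ∈ B ∧ P u}.ncard := by
  rw [← Set.ncard_coe_finset]
  refine Set.ncard_le_ncard (fun u hu => ?_) (Set.toFinite _)
  rw [Finset.coe_inter, Set.mem_inter_iff] at hu
  exact ⟨hu.2, h u hu.1⟩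

theorem Finset.ncard_setOf_eq_card_inter (h : ∀ u, u ∈ s ↔ P u) :
    {u | u ∈ B ∧ P u}.ncard = (s ∩ B).card := by
  rw [← Set.ncard_coe_finset]
  congr 1
  ext u
  simp [h, and_comm]

end Counting

section Cost

noncomputable def subtreeWeight (T : SimpleGraph V) [Fintype T.edgeSet] (w : Sym2 V → ℝ)
    (s : Finset V) : ℝ :=
  ∑ e ∈ T.edgeFinset, ({e' : Sym2 V | ∀ x ∈ e', x ∈ s} : Set (Sym2 V)).indicator w e

def labelingCost (T : SimpleGraph V) [Fintype T.edgeSet] (w : Sym2 V → ℝ)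
    (lab : Sym2 V → Finset ℕ) : ℝ :=
  ∑ e ∈ T.edgeFinset, ((lab e).card : ℝ) * w e

theorem sum_indicator_le_labelingCost {T : SimpleGraph V} [Fintype T.edgeSet]
    {w : Sym2 V → ℝ} {S : Set (Sym2 V)} {lab : Sym2 V → Finset ℕ}
    (hw : ∀ e ∈ T.edgeSet, 0 ≤ w e)
    (hlab : ∀ e ∈ T.edgeSet, e ∈ S → (lab e).Nonempty) :
    ∑ e ∈ T.edgeFinset, S.indicator w e ≤ labelingCost T w lab := by
  refine Finset.sum_le_sum fun e he => ?_
  rw [mem_edgeFinset] at he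
  by_cases hS : e ∈ S
  · rw [Set.indicator_of_mem hS]
    exact le_mul_of_one_le_left (hw e he) (by exact_mod_cast (hlab e he hS).card_pos)
  · rw [Set.indicator_of_notMem hS]
    exact mul_nonneg (Nat.cast_nonneg _) (hw e he)

end Cost

section Realization

variable [Fintype V] {T : SimpleGraph V} {t : V} {s : Finset V}

/-- The edge whose far end is at distance `d` from `t` is active at time `card V - d`, so times
increase along every path towards `t`. -/
noncomputable def subtreeLabeling (T : SimpleGraph V) (t : V) (s : Finset V) :
    Sym2 V → Finset ℕ :=
  open Classical in fun e =>
    if e ∈ T.edgeSet ∧ ∀ x ∈ e, x ∈ s then {Fintype.card V - (e.map (T.dist · t)).sup}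
    else ∅

theorem subtreeLabeling_of_notMem_edgeSet {e : Sym2 V} (he : e ∉ T.edgeSet) :
    subtreeLabeling T t s e = ∅ := by
  simp [subtreeLabeling, he]

theorem labelingCost_subtreeLabeling [Fintype T.edgeSet] {w : Sym2 V → ℝ} :
    labelingCost T w (subtreeLabeling T t s) = subtreeWeight T w s := by
  refine Finset.sum_congr rfl fun e he => ?_
  rw [mem_edgeFinset] at he
  by_cases hs : e ∈ {e' : Sym2 V | ∀ x ∈ e', x ∈ s}
  · rw [subtreeLabeling, if_pos ⟨he, hs⟩, Set.indicator_of_mem hs]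
    simp
  · rw [subtreeLabeling, if_neg (hs ·.2), Set.indicator_of_notMem hs]
    simp

theorem SimpleGraph.IsAcyclic.temporallyReachable_subtreeLabeling (hT : T.IsAcyclic)
    (hs : (T.induce (s : Set V)).Connected) (ht : t ∈ s) {u : V} (hu : u ∈ s) :
    TemporallyReachable (inducedTemporalEdges T (subtreeLabeling T t s)) u t := by
  obtain ⟨p, hp, hps⟩ := hs.exists_isPath_of_induce hu ht
  have hlen := hp.length_lt
  refine p.temporallyReachable (fun i => Fintype.card V - p.length + i)
    (fun _ _ hij => Nat.add_lt_add_left hij _) fun i hi => ?_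
  have hsupp : ∀ x ∈ s(p.getVert i, p.getVert (i + 1)), x ∈ s := by
    rintro x hx
    rcases Sym2.mem_iff.1 hx with rfl | rfl <;> exact hps _ (p.getVert_mem_support _)
  rw [subtreeLabeling, if_pos ⟨p.adj_getVert_succ hi, hsupp⟩, Finset.mem_singleton,
    Sym2.map_mk, Sym2.sup_mk, hT.dist_getVert hp, hT.dist_getVert hp]
  omega

end Realization

end

theorem fml_tree_equals_subtree_min_general {V : Type*} [Fintype V] [DecidableEq V]
    (T : SimpleGraph V) [DecidableRel T.Adj] (hT : T.IsTree) (t : V)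
    (w : Sym2 V → ℝ) (hw : ∀ e ∈ T.edgeSet, 1 ≤ w e)
    (B R : Finset V) (α : ℝ) (hα1 : α ≤ 1) :
    ∃ c : ℝ,
      IsLeast { c' : ℝ | ∃ lab : Sym2 V → Finset ℕ,
        (∀ e, e ∉ T.edgeSet → lab e = ∅) ∧
        α * (B.card : ℝ) ≤ (Set.ncard {u : V | u ∈ B ∧
          TemporallyReachable (inducedTemporalEdges T lab) u t} : ℝ) ∧
        α * (R.card : ℝ) ≤ (Set.ncard {u : V | u ∈ R ∧
          TemporallyReachable (inducedTemporalEdges T lab) u t} : ℝ) ∧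
        c' = ∑ e ∈ T.edgeFinset, ((lab e).card : ℝ) * w e } c ∧
      IsLeast { c' : ℝ | ∃ s : Finset V,
        t ∈ s ∧ (SimpleGraph.induce (s : Set V) T).Connected ∧
        α * (B.card : ℝ) ≤ ((s ∩ B).card : ℝ) ∧
        α * (R.card : ℝ) ≤ ((s ∩ R).card : ℝ) ∧
        c' = ∑ e ∈ T.edgeFinset,
          ({e' : Sym2 V | ∀ x ∈ e', x ∈ s} : Set (Sym2 V)).indicator w e } c := by
  classical
  set Feasible : Finset V → Prop := fun s => t ∈ s ∧ (T.induce (s : Set V)).Connected ∧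
    α * (B.card : ℝ) ≤ ((s ∩ B).card : ℝ) ∧
    α * (R.card : ℝ) ≤ ((s ∩ R).card : ℝ)
  have feasible_univ : Feasible Finset.univ := by
    refine ⟨Finset.mem_univ t, ?_, ?_, ?_⟩
    · rw [Finset.coe_univ]
      exact (induceUnivIso T).connected_iff.2 hT.connected
    all_goals rw [Finset.univ_inter]; exact mul_le_of_le_one_left (Nat.cast_nonneg _) hα1
  obtain ⟨s₀, ⟨ht, hconn, hB, hR⟩, hmin⟩ := Set.exists_min_image {s | Feasible s}
    (subtreeWeight T w) (Set.toFinite _) ⟨_, feasible_univ⟩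
  have hreach : ∀ u ∈ s₀,
      TemporallyReachable (inducedTemporalEdges T (subtreeLabeling T t s₀)) u t :=
    fun _ hu => hT.isAcyclic.temporallyReachable_subtreeLabeling hconn ht hu
  refine ⟨subtreeWeight T w s₀, ⟨⟨subtreeLabeling T t s₀,
    fun _ he => subtreeLabeling_of_notMem_edgeSet he,
    hB.trans (mod_cast Finset.card_inter_le_ncard_setOf hreach),
    hR.trans (mod_cast Finset.card_inter_le_ncard_setOf hreach),
    labelingCost_subtreeLabeling.symm⟩, ?_⟩,
    ⟨s₀, ht, hconn, hB, hR, rfl⟩,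
    fun _ ⟨s, hts, hsconn, hsB, hsR, hc⟩ => hc ▸ hmin s ⟨hts, hsconn, hsB, hsR⟩⟩
  rintro _ ⟨lab, -, hB, hR, rfl⟩
  set s := Finset.univ.filter fun u => TemporallyReachable (inducedTemporalEdges T lab) u t
  have hs : ∀ u, u ∈ s ↔ TemporallyReachable (inducedTemporalEdges T lab) u t := by simp [s]
  rw [Finset.ncard_setOf_eq_card_inter hs] at hB hR
  calc subtreeWeight T w s₀
      ≤ subtreeWeight T w s := hmin s ⟨(hs t).2 (.inl rfl),
        connected_induce_of_temporallyReachable hs, hB, hR⟩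
    _ ≤ labelingCost T w lab :=
      sum_indicator_le_labelingCost (fun e he => zero_le_one.trans (hw e he))
        fun _ he hes => hT.isAcyclic.label_nonempty_of_temporallyReachable he
          fun x hx => (hs x).1 (hes x hx)

/-- on a finite tree `T` with terminal `t`, edge weights `w ≥ 1`, groups
`B, R` and `α ∈ [0,1]`, the minimum of the weighted cost
`Σ_{({u,v},τ) ∈ E_λ} w({u,v}) = Σ_e |λ(e)|·w(e)` over all temporal labelings `λ` such
that at least `α·|B|` nodes of `B` and at least `α·|R|` nodes of `R` temporally reach `t`
in `T_λ`, equals the minimum of `w(S) = Σ_{e ∈ S} w(e)` over all connected subtrees `S`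
of `T` containing `t` with `|V(S) ∩ B| ≥ α·|B|` and `|V(S) ∩ R| ≥ α·|R|`; both minima are
attained. -/
theorem fml_tree_equals_subtree_min {V : Type*} [Fintype V] [DecidableEq V]
    (T : SimpleGraph V) [DecidableRel T.Adj] (hT : T.IsTree) (t : V)
    (w : Sym2 V → ℝ) (hw : ∀ e ∈ T.edgeSet, 1 ≤ w e)
    (B R : Finset V) (α : ℝ) (hα0 : 0 ≤ α) (hα1 : α ≤ 1) :
    ∃ c : ℝ,
      IsLeast { c' : ℝ | ∃ lab : Sym2 V → Finset ℕ,
        (∀ e, e ∉ T.edgeSet → lab e = ∅) ∧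
        α * (B.card : ℝ) ≤ (Set.ncard {u : V | u ∈ B ∧
          TemporallyReachable (inducedTemporalEdges T lab) u t} : ℝ) ∧
        α * (R.card : ℝ) ≤ (Set.ncard {u : V | u ∈ R ∧
          TemporallyReachable (inducedTemporalEdges T lab) u t} : ℝ) ∧
        c' = ∑ e ∈ T.edgeFinset, ((lab e).card : ℝ) * w e } c ∧
      IsLeast { c' : ℝ | ∃ s : Finset V,
        t ∈ s ∧ (SimpleGraph.induce (s : Set V) T).Connected ∧
        α * (B.card : ℝ) ≤ ((s ∩ B).card : ℝ) ∧
        α * (R.card : ℝ) ≤ ((s ∩ R).card : ℝ) ∧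
        c' = ∑ e ∈ T.edgeFinset,
          ({e' : Sym2 V | ∀ x ∈ e', x ∈ s} : Set (Sym2 V)).indicator w e } c :=
  fml_tree_equals_subtree_min_general T hT t w hw B R α hα1
end

section
/- Fix ε > 0 and let ξ = (1+ε)^{H+1}, where H is the height of T. Let B and R denote the sets of blue and red nodes of T, and let α ∈ [0, 1]. If (b_opt, r_opt, c_opt) ∈ L_t is an exact label at the root t with b_opt ≥ α·|B| and r_opt ≥ α·|R| and with minimum cost c_opt among all such labels, then there exists a label (b', r', c') in the bucketed label set L'_t at the root with (i) c' ≤ c_opt and (ii) b' ≥ b_opt/ξ ≥ (α·|B|)/ξ and r' ≥ r_opt/ξ ≥ (α·|R|)/ξ. -/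
/-- A DP label `(b, r, c)`: counts of blue and red nodes covered, and cost. -/
abbrev DPLabel : Type := ℕ × ℕ × ℝ

/-- A finite tree rooted at `root`, given by a parent function together with a depth
function certifying acyclicity. -/
structure FMLTree (V : Type*) where
  root : V
  parent : V → V
  depth : V → ℕ
  parent_root : parent root = root
  depth_root : depth root = 0
  depth_parent : ∀ v, v ≠ root → depth (parent v) + 1 = depth v

/-- The children of `v`. -/
def FMLTree.children {V : Type*} [Fintype V] [DecidableEq V]
    (T : FMLTree V) (v : V) : Finset V :=
  Finset.univ.filter fun u => u ≠ T.root ∧ T.parent u = v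

/-- `x` lies in the subtree `T_v` rooted at `v`. -/
def FMLTree.IsDesc {V : Type*} (T : FMLTree V) (v x : V) : Prop :=
  ∃ k : ℕ, T.parent^[k] x = v

/-- The height `h_v` of the subtree `T_v` rooted at `v`. -/
noncomputable def FMLTree.heightOf {V : Type*} (T : FMLTree V) (v : V) : ℕ :=
  sSup {k : ℕ | ∃ x, T.IsDesc v x ∧ T.depth x = T.depth v + k}

/-- The candidate labels at node `v`, formed from label sets `L u` at the children `u`
of `v`: choose for each child either nothing or one label `(b_u, r_u, c_u) ∈ L u`,
contributing `(b_u, r_u, c_u + w({v,u}))`, sum the chosen contributions coordinatewise,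
and add `(1,0,0)` if `v` is blue and `(0,1,0)` if `v` is red. -/
def candidates {V : Type*} [Fintype V] [DecidableEq V] (T : FMLTree V)
    (col : V → Option Bool) (w : V → ℝ) (L : V → Set DPLabel) (v : V) : Set DPLabel :=
  { l | ∃ choice : V → Option DPLabel,
      (∀ u, u ∉ T.children v → choice u = none) ∧
      (∀ u l', choice u = some l' → l' ∈ L u) ∧
      l.1 = (∑ u ∈ T.children v, ((choice u).map Prod.fst).getD 0)
              + (if col v = some true then 1 else 0) ∧
      l.2.1 = (∑ u ∈ T.children v, ((choice u).map fun l' => l'.2.1).getD 0)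
              + (if col v = some false then 1 else 0) ∧
      l.2.2 = ∑ u ∈ T.children v, ((choice u).map fun l' => l'.2.2 + w u).getD 0 }

/-- `L` is the family of exact label sets computed by the bottom-up dynamic program. -/
def IsExactDP {V : Type*} [Fintype V] [DecidableEq V] (T : FMLTree V)
    (col : V → Option Bool) (w : V → ℝ) (L : V → Set DPLabel) : Prop :=
  ∀ v : V,
    L v ⊆ candidates T col w L v ∧
    (∀ l ∈ L v, ∀ l' ∈ candidates T col w L v,
      l'.1 = l.1 → l'.2.1 = l.2.1 → l.2.2 ≤ l'.2.2) ∧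
    (∀ l' ∈ candidates T col w L v,
      ∃ l ∈ L v, l.1 = l'.1 ∧ l.2.1 = l'.2.1 ∧ l.2.2 ≤ l'.2.2)

/-- The bucket index of `x : ℕ`: `0` for `x = 0`, and otherwise the least `i ≥ 1` with
`x ≤ (1+ε)^i`. -/
noncomputable def bucketIndex (ε : ℝ) (x : ℕ) : ℕ :=
  if x = 0 then 0 else sInf {i : ℕ | 1 ≤ i ∧ (x : ℝ) ≤ (1 + ε) ^ i}

/-- `L'` is the family of bucketed label sets computed by the geometric-bucketing
bottom-up dynamic program: candidates are formed exactly as in the exact DP but from the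
bucketed label sets of the children, and for each pair of bucket indices only one
candidate of minimum cost is retained. -/
def IsBucketDP {V : Type*} [Fintype V] [DecidableEq V] (ε : ℝ) (T : FMLTree V)
    (col : V → Option Bool) (w : V → ℝ) (L' : V → Set DPLabel) : Prop :=
  ∀ v : V,
    L' v ⊆ candidates T col w L' v ∧
    (∀ l ∈ L' v, ∀ l' ∈ candidates T col w L' v,
      bucketIndex ε l'.1 = bucketIndex ε l.1 →
      bucketIndex ε l'.2.1 = bucketIndex ε l.2.1 → l.2.2 ≤ l'.2.2) ∧
    (∀ l' ∈ candidates T col w L' v,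
      ∃ l ∈ L' v, bucketIndex ε l.1 = bucketIndex ε l'.1 ∧
        bucketIndex ε l.2.1 = bucketIndex ε l'.2.1 ∧ l.2.2 ≤ l'.2.2)

/-! Every exact label at a node `v` is dominated, up to the factor `(1 + ε) ^ (h_v + 1)`, by a
bucketed label at `v` that is no more expensive. Induct on `h_v`: replacing the chosen child
labels of an exact candidate by their dominating bucketed labels gives a candidate of the
bucketed DP, losing at most `(1 + ε) ^ h_v` since the children have height `< h_v`; bucketing
that candidate loses one more factor `1 + ε`, because two counts in the same bucket differ by
at most that factor. -/

def LabelApprox (q : ℝ) (l l' : DPLabel) : Prop :=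
  l'.2.2 ≤ l.2.2 ∧ (l.1 : ℝ) ≤ q * l'.1 ∧ (l.2.1 : ℝ) ≤ q * l'.2.1

lemma LabelApprox.trans {q q' : ℝ} {l l' l'' : DPLabel} (hq : 0 ≤ q)
    (h : LabelApprox q l l') (h' : LabelApprox q' l' l'') : LabelApprox (q * q') l l'' :=
  ⟨h'.1.trans h.1,
    h.2.1.trans <| (mul_le_mul_of_nonneg_left h'.2.1 hq).trans_eq (mul_assoc ..).symm,
    h.2.2.trans <| (mul_le_mul_of_nonneg_left h'.2.2 hq).trans_eq (mul_assoc ..).symm⟩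

lemma LabelApprox.getD_map {q : ℝ} {o : Option DPLabel} {g : DPLabel → DPLabel}
    (hg : ∀ l, o = some l → LabelApprox q l (g l)) (c : ℝ) :
    (((o.map Prod.fst).getD 0 : ℕ) : ℝ) ≤ q * (((o.map g).map Prod.fst).getD 0 : ℕ) ∧
    (((o.map fun l => l.2.1).getD 0 : ℕ) : ℝ)
      ≤ q * (((o.map g).map fun l => l.2.1).getD 0 : ℕ) ∧
    ((o.map g).map fun l => l.2.2 + c).getD 0 ≤ (o.map fun l => l.2.2 + c).getD 0 := by
  cases o with
  | none => simp
  | some l =>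
    obtain ⟨hc, hb, hr⟩ := hg l rfl
    simp only [Option.map_some, Option.getD_some]
    exact ⟨hb, hr, by linarith⟩

section Bucket

variable {ε : ℝ}

lemma bucketIndex_spec (hε : 0 < ε) {x : ℕ} (hx : x ≠ 0) :
    1 ≤ bucketIndex ε x ∧ (x : ℝ) ≤ (1 + ε) ^ bucketIndex ε x := by
  obtain ⟨n, hn⟩ := pow_unbounded_of_one_lt (x : ℝ) (lt_add_of_pos_right 1 hε)
  have hne : {i : ℕ | 1 ≤ i ∧ (x : ℝ) ≤ (1 + ε) ^ i}.Nonempty :=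
    ⟨n + 1, by omega, hn.le.trans (pow_le_pow_right₀ (by linarith) n.le_succ)⟩
  rw [bucketIndex, if_neg hx]
  exact Nat.sInf_mem hne

lemma one_add_pow_bucketIndex_le (hε : 0 < ε) {x : ℕ} (hx : x ≠ 0) :
    (1 + ε) ^ bucketIndex ε x ≤ (1 + ε) * x := by
  obtain ⟨hi1, -⟩ := bucketIndex_spec hε hx
  have hprev : (1 + ε) ^ (bucketIndex ε x - 1) ≤ (x : ℝ) := by
    rcases hi1.eq_or_lt with h | h
    · rw [← h, Nat.sub_self, pow_zero]
      exact_mod_cast Nat.one_le_iff_ne_zero.mpr hx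
    · have hnot : bucketIndex ε x - 1 ∉ {j : ℕ | 1 ≤ j ∧ (x : ℝ) ≤ (1 + ε) ^ j} := by
        apply Nat.notMem_of_lt_sInf
        rw [bucketIndex, if_neg hx] at h ⊢
        exact Nat.sub_one_lt_of_lt h
      simp only [Set.mem_ofPred_eq, not_and, not_le] at hnot
      exact (hnot (by omega)).le
  calc (1 + ε) ^ bucketIndex ε x = (1 + ε) * (1 + ε) ^ (bucketIndex ε x - 1) := by
        rw [← pow_succ', Nat.sub_add_cancel hi1]
    _ ≤ (1 + ε) * x := by gcongr

lemma cast_le_mul_of_bucketIndex_eq (hε : 0 < ε) {x y : ℕ}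
    (h : bucketIndex ε x = bucketIndex ε y) : (x : ℝ) ≤ (1 + ε) * y := by
  rcases eq_or_ne x 0 with rfl | hx
  · push_cast; positivity
  have hy : y ≠ 0 := by
    rintro rfl
    have := (bucketIndex_spec hε hx).1
    rw [h, bucketIndex, if_pos rfl] at this
    omega
  calc (x : ℝ) ≤ (1 + ε) ^ bucketIndex ε x := (bucketIndex_spec hε hx).2
    _ = (1 + ε) ^ bucketIndex ε y := by rw [h]
    _ ≤ (1 + ε) * y := one_add_pow_bucketIndex_le hε hy

end Bucket

namespace FMLTree

variable {V : Type*} (T : FMLTree V)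

lemma IsDesc.of_parent {u v x : V} (hx : T.IsDesc u x) (hu : T.parent u = v) :
    T.IsDesc v x := by
  obtain ⟨k, hk⟩ := hx
  exact ⟨k + 1, by rw [Function.iterate_succ_apply', hk, hu]⟩

variable [Fintype V]

lemma bddAbove_heightSet (v : V) :
    BddAbove {k : ℕ | ∃ x, T.IsDesc v x ∧ T.depth x = T.depth v + k} :=
  ⟨Finset.univ.sup T.depth, fun k ⟨x, _, hx⟩ =>
    (Nat.le_add_left k _).trans (hx ▸ Finset.le_sup (f := T.depth) (Finset.mem_univ x))⟩

lemma exists_isDesc_depth_eq_heightOf (v : V) :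
    ∃ x, T.IsDesc v x ∧ T.depth x = T.depth v + T.heightOf v :=
  Nat.sSup_mem (s := {k : ℕ | ∃ x, T.IsDesc v x ∧ T.depth x = T.depth v + k})
    ⟨0, v, ⟨0, rfl⟩, rfl⟩ (T.bddAbove_heightSet v)

lemma heightOf_lt_of_mem_children [DecidableEq V] {u v : V} (hu : u ∈ T.children v) :
    T.heightOf u < T.heightOf v := by
  obtain ⟨hur, rfl⟩ : u ≠ T.root ∧ T.parent u = v := by simpa [children] using hu
  obtain ⟨x, hx, hdx⟩ := T.exists_isDesc_depth_eq_heightOf u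
  have hdu := T.depth_parent u hur
  exact Nat.lt_of_succ_le <| le_csSup (T.bddAbove_heightSet _) ⟨x, hx.of_parent T rfl, by omega⟩

end FMLTree

section Candidates

variable {V : Type*} [Fintype V] [DecidableEq V] {T : FMLTree V} {col : V → Option Bool}
  {w : V → ℝ} {L L' : V → Set DPLabel} {v : V}

lemma exists_candidate_labelApprox {q : ℝ} (hq : 1 ≤ q)
    (happrox : ∀ u ∈ T.children v, ∀ l ∈ L u, ∃ l' ∈ L' u, LabelApprox q l l')
    {l : DPLabel} (hl : l ∈ candidates T col w L v) :
    ∃ l' ∈ candidates T col w L' v, LabelApprox q l l' := by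
  obtain ⟨choice, hnone, hmem, hb, hr, hc⟩ := hl
  have hpick : ∀ u lu, ∃ lu', u ∈ T.children v → lu ∈ L u →
      lu' ∈ L' u ∧ LabelApprox q lu lu' := by
    intro u lu
    by_cases h : u ∈ T.children v ∧ lu ∈ L u
    · obtain ⟨lu', h1, h2⟩ := happrox u h.1 lu h.2
      exact ⟨lu', fun _ _ => ⟨h1, h2⟩⟩
    · exact ⟨lu, fun h1 h2 => (h ⟨h1, h2⟩).elim⟩
  choose pick hpick using hpick
  have hchild (u) (hu : u ∈ T.children v) :=
    LabelApprox.getD_map (g := pick u) (fun lu hcu => (hpick u lu hu (hmem u lu hcu)).2) (w u)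
  have hcolor : ∀ (p : Prop) [Decidable p],
      (if p then (1 : ℝ) else 0) ≤ q * if p then 1 else 0 := by
    intro p _; split_ifs <;> simp [hq]
  refine ⟨(_, _, _), ⟨fun u => (choice u).map (pick u), ?_, ?_, rfl, rfl, rfl⟩, ?_, ?_, ?_⟩
  · intro u hu
    simp [hnone u hu]
  · intro u lu' hlu'
    obtain ⟨lu, hcu, rfl⟩ := Option.map_eq_some_iff.mp hlu'
    have hu : u ∈ T.children v := by_contra fun hu => by simp [hnone u hu] at hcu
    exact (hpick u lu hu (hmem u lu hcu)).1
  · rw [hc]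
    exact Finset.sum_le_sum fun u hu => (hchild u hu).2.2
  · rw [hb]
    push_cast
    rw [mul_add, Finset.mul_sum]
    exact add_le_add (Finset.sum_le_sum fun u hu => (hchild u hu).1) (hcolor _)
  · rw [hr]
    push_cast
    rw [mul_add, Finset.mul_sum]
    exact add_le_add (Finset.sum_le_sum fun u hu => (hchild u hu).2.1) (hcolor _)

lemma IsBucketDP.exists_labelApprox_of_mem_candidates {ε : ℝ} (hε : 0 < ε)
    (hL' : IsBucketDP ε T col w L') {l : DPLabel} (hl : l ∈ candidates T col w L' v) :
    ∃ l' ∈ L' v, LabelApprox (1 + ε) l l' := by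
  obtain ⟨l', hl', hb, hr, hc⟩ := (hL' v).2.2 l hl
  exact ⟨l', hl', hc, cast_le_mul_of_bucketIndex_eq hε hb.symm,
    cast_le_mul_of_bucketIndex_eq hε hr.symm⟩

theorem exists_bucketDP_labelApprox {ε : ℝ} (hε : 0 < ε)
    (hL : ∀ v, L v ⊆ candidates T col w L v) (hL' : IsBucketDP ε T col w L') (n : ℕ) :
    ∀ v, T.heightOf v ≤ n → ∀ l ∈ L v,
      ∃ l' ∈ L' v, LabelApprox ((1 + ε) ^ (n + 1)) l l' := by
  have step : ∀ m v, (∀ u ∈ T.children v, ∀ l ∈ L u, ∃ l' ∈ L' u,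
      LabelApprox ((1 + ε) ^ m) l l') →
      ∀ l ∈ L v, ∃ l' ∈ L' v, LabelApprox ((1 + ε) ^ (m + 1)) l l' := by
    intro m v hchildren l hl
    obtain ⟨l₁, hl₁, happrox₁⟩ :=
      exists_candidate_labelApprox (one_le_pow₀ (by linarith)) hchildren (hL v hl)
    obtain ⟨l₂, hl₂, happrox₂⟩ := hL'.exists_labelApprox_of_mem_candidates hε hl₁
    exact ⟨l₂, hl₂, pow_succ (1 + ε) m ▸ happrox₁.trans (by positivity) happrox₂⟩
  induction n with
  | zero =>
    intro v hv
    refine step 0 v fun u hu => ?_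
    have := T.heightOf_lt_of_mem_children hu
    omega
  | succ n ih =>
    intro v hv
    refine step (n + 1) v fun u hu => ih u ?_
    have := T.heightOf_lt_of_mem_children hu
    omega

end Candidates

theorem bucketDP_root_guarantee_general {V : Type*} [Fintype V] [DecidableEq V]
    (ε : ℝ) (hε : 0 < ε) (T : FMLTree V) (col : V → Option Bool) (w : V → ℝ)
    (L L' : V → Set DPLabel) (hL : IsExactDP T col w L)
    (hL' : IsBucketDP ε T col w L')
    (α : ℝ)
    (bopt ropt : ℕ) (copt : ℝ)
    (hmem : (bopt, ropt, copt) ∈ L T.root)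
    (hbopt : α * ((Finset.univ.filter fun x => col x = some true).card : ℝ) ≤ (bopt : ℝ))
    (hropt : α * ((Finset.univ.filter fun x => col x = some false).card : ℝ) ≤ (ropt : ℝ)) :
    ∃ l' ∈ L' T.root,
      l'.2.2 ≤ copt ∧
      (bopt : ℝ) / (1 + ε) ^ (T.heightOf T.root + 1) ≤ (l'.1 : ℝ) ∧
      α * ((Finset.univ.filter fun x => col x = some true).card : ℝ)
          / (1 + ε) ^ (T.heightOf T.root + 1)
        ≤ (bopt : ℝ) / (1 + ε) ^ (T.heightOf T.root + 1) ∧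
      (ropt : ℝ) / (1 + ε) ^ (T.heightOf T.root + 1) ≤ (l'.2.1 : ℝ) ∧
      α * ((Finset.univ.filter fun x => col x = some false).card : ℝ)
          / (1 + ε) ^ (T.heightOf T.root + 1)
        ≤ (ropt : ℝ) / (1 + ε) ^ (T.heightOf T.root + 1) := by
  obtain ⟨l', hl', hcost, hb, hr⟩ := exists_bucketDP_labelApprox hε (fun v => (hL v).1) hL'
    (T.heightOf T.root) T.root le_rfl _ hmem
  have hξ : (0 : ℝ) < (1 + ε) ^ (T.heightOf T.root + 1) := by positivity
  refine ⟨l', hl', hcost, ?_, div_le_div_of_nonneg_right hbopt hξ.le, ?_,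
    div_le_div_of_nonneg_right hropt hξ.le⟩
  · rw [div_le_iff₀' hξ]; exact hb
  · rw [div_le_iff₀' hξ]; exact hr

/-- fix `ε > 0` and let `ξ = (1+ε)^(H+1)` where `H` is the height of `T`.
Let `B` and `R` be the sets of blue and red nodes and `α ∈ [0,1]`.  If
`(b_opt, r_opt, c_opt) ∈ L t` is an exact label at the root `t` with `b_opt ≥ α·|B|`,
`r_opt ≥ α·|R|` and minimum cost `c_opt` among all such labels, then the bucketed label
set `L' t` contains a label `(b', r', c')` with (i) `c' ≤ c_opt` and
(ii) `b' ≥ b_opt/ξ ≥ (α·|B|)/ξ` and `r' ≥ r_opt/ξ ≥ (α·|R|)/ξ`. -/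
theorem bucketDP_root_guarantee {V : Type*} [Fintype V] [DecidableEq V]
    (ε : ℝ) (hε : 0 < ε) (T : FMLTree V) (col : V → Option Bool) (w : V → ℝ)
    (hw : ∀ u, u ≠ T.root → 1 ≤ w u)
    (L L' : V → Set DPLabel) (hL : IsExactDP T col w L)
    (hL' : IsBucketDP ε T col w L')
    (α : ℝ) (hα0 : 0 ≤ α) (hα1 : α ≤ 1)
    (bopt ropt : ℕ) (copt : ℝ)
    (hmem : (bopt, ropt, copt) ∈ L T.root)
    (hbopt : α * ((Finset.univ.filter fun x => col x = some true).card : ℝ) ≤ (bopt : ℝ))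
    (hropt : α * ((Finset.univ.filter fun x => col x = some false).card : ℝ) ≤ (ropt : ℝ))
    (hmin : ∀ l ∈ L T.root,
      α * ((Finset.univ.filter fun x => col x = some true).card : ℝ) ≤ (l.1 : ℝ) →
      α * ((Finset.univ.filter fun x => col x = some false).card : ℝ) ≤ (l.2.1 : ℝ) →
      copt ≤ l.2.2) :
    ∃ l' ∈ L' T.root,
      l'.2.2 ≤ copt ∧
      (bopt : ℝ) / (1 + ε) ^ (T.heightOf T.root + 1) ≤ (l'.1 : ℝ) ∧
      α * ((Finset.univ.filter fun x => col x = some true).card : ℝ)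
          / (1 + ε) ^ (T.heightOf T.root + 1)
        ≤ (bopt : ℝ) / (1 + ε) ^ (T.heightOf T.root + 1) ∧
      (ropt : ℝ) / (1 + ε) ^ (T.heightOf T.root + 1) ≤ (l'.2.1 : ℝ) ∧
      α * ((Finset.univ.filter fun x => col x = some false).card : ℝ)
          / (1 + ε) ^ (T.heightOf T.root + 1)
        ≤ (ropt : ℝ) / (1 + ε) ^ (T.heightOf T.root + 1) :=
  bucketDP_root_guarantee_general ε hε T col w L L' hL hL' α bopt ropt copt hmem hbopt hropt
end
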